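/- arXiv:1709.00459 — 3 statements merged into one kernel-verified Lean document; each statement's English description precedes it below -/
import Mathlib

section
/- In the polynomial ring A[w], the additive polynomials f(w) = x·w + (x² + x)·w² + w⁴ and g(w) = y·w + (y² + y)·w² + x·(y² + y)·w⁴ + w⁸ commute under composition: f(g(w)) = g(f(w)). (These are the actions ρ_x and ρ_y of the rank-one Drinfeld module over A.) -/
/-! In characteristic 2 squaring is additive, so `f` and `g` are additive in `w` and each of
`f(g(w))`, `g(f(w))` is a sum of monomials `c_k w^(2^k)`, `k ≤ 5` (equivalently, one
multiplies `x + (x² + x)τ + τ²` and `y + (y² + y)τ + x(y² + y)τ² + τ³` in the twisted ring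
`A{τ}`, `τa = a²τ`). Comparing the coefficients `c_k` leaves identities between `x` and `y`
that hold modulo `y² + y + x³ + x + 1` in characteristic 2. -/

noncomputable section

open Polynomial

/-- The defining polynomial `Y² + Y + (X³ + X + 1)` over `𝔽₂[X]`,
viewed as a polynomial in `Y` with coefficients in `𝔽₂[X]`. -/
def curveEq : Polynomial (Polynomial (ZMod 2)) :=
  X ^ 2 + X + C (X ^ 3 + X + 1)

/-- The ring `A = 𝔽₂[X,Y]/(Y² + Y + X³ + X + 1)`. -/
abbrev A : Type := AdjoinRoot curveEq

/-- The image `x` of `X` in `A`. -/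
def aX : A := AdjoinRoot.of curveEq (X : Polynomial (ZMod 2))

/-- The image `y` of `Y` in `A`. -/
def aY : A := AdjoinRoot.root curveEq

/-- The action of the Drinfeld module on `x`, as a polynomial in `A[w]`:
`ρ_x(w) = x·w + (x² + x)·w² + w⁴`. -/
def rhoX : Polynomial A := C aX * X + C (aX ^ 2 + aX) * X ^ 2 + X ^ 4

/-- The action of the Drinfeld module on `y`, as a polynomial in `A[w]`:
`ρ_y(w) = y·w + (y² + y)·w² + x·(y² + y)·w⁴ + w⁸`. -/
def rhoY : Polynomial A :=
  C aY * X + C (aY ^ 2 + aY) * X ^ 2 + C (aX * (aY ^ 2 + aY)) * X ^ 4 + X ^ 8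

section Commute

variable {S : Type*} [CommRing S]

def phiX (u w : S) : S := u * w + (u ^ 2 + u) * w ^ 2 + w ^ 4

def phiY (u v w : S) : S := v * w + (v ^ 2 + v) * w ^ 2 + u * (v ^ 2 + v) * w ^ 4 + w ^ 8

lemma phiX_comp (u : S) (q : S[X]) : (phiX (C u) X).comp q = phiX (C u) q := by
  simp only [phiX, add_comp, mul_comp, pow_comp, C_comp, X_comp]

lemma phiY_comp (u v : S) (q : S[X]) : (phiY (C u) (C v) X).comp q = phiY (C u) (C v) q := by
  simp only [phiY, add_comp, mul_comp, pow_comp, C_comp, X_comp]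

variable [CharP S 2] {u v : S}

lemma phiX_phiY_comm (h : v ^ 2 + v + (u ^ 3 + u + 1) = 0) (w : S) :
    phiX u (phiY u v w) = phiY u v (phiX u w) := by
  set t := v ^ 2 + v
  have coeff2 : u * t + (u ^ 2 + u) * v ^ 2 = v * (u ^ 2 + u) + t * u ^ 2 := by grind
  have coeff4 : u * (u * t) + (u ^ 2 + u) * t ^ 2 + v ^ 4 =
      v + t * (u ^ 2 + u) ^ 2 + u * t * u ^ 4 := by grind
  have coeff8 : u + (u ^ 2 + u) * (u ^ 2 * t ^ 2) + t ^ 4 =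
      t + u * t * (u ^ 2 + u) ^ 4 + u ^ 8 := by grind
  have coeff16 : (u ^ 2 + u) + u ^ 4 * t ^ 4 = u * t + (u ^ 2 + u) ^ 8 := by grind
  have hg2 : phiY u v w ^ 2 = v ^ 2 * w ^ 2 + t ^ 2 * w ^ 4 + u ^ 2 * t ^ 2 * w ^ 8 + w ^ 16 := by
    rw [phiY, CharTwo.add_sq, CharTwo.add_sq, CharTwo.add_sq]; ring
  have hg4 : phiY u v w ^ 4 = v ^ 4 * w ^ 4 + t ^ 4 * w ^ 8 + u ^ 4 * t ^ 4 * w ^ 16 + w ^ 32 := by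
    rw [show 4 = 2 * 2 from rfl, pow_mul, hg2, CharTwo.add_sq, CharTwo.add_sq, CharTwo.add_sq]
    ring
  have hf2 : phiX u w ^ 2 = u ^ 2 * w ^ 2 + (u ^ 2 + u) ^ 2 * w ^ 4 + w ^ 8 := by
    rw [phiX, CharTwo.add_sq, CharTwo.add_sq]; ring
  have hf4 : phiX u w ^ 4 = u ^ 4 * w ^ 4 + (u ^ 2 + u) ^ 4 * w ^ 8 + w ^ 16 := by
    rw [show 4 = 2 * 2 from rfl, pow_mul, hf2, CharTwo.add_sq, CharTwo.add_sq]; ring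
  have hf8 : phiX u w ^ 8 = u ^ 8 * w ^ 8 + (u ^ 2 + u) ^ 8 * w ^ 16 + w ^ 32 := by
    rw [show 8 = 4 * 2 from rfl, pow_mul, hf4, CharTwo.add_sq, CharTwo.add_sq]; ring
  rw [phiX.eq_1 u (phiY u v w), phiY.eq_1 u v (phiX u w), hg2, hg4, hf2, hf4, hf8]
  unfold phiX phiY
  linear_combination w ^ 2 * coeff2 + w ^ 4 * coeff4 + w ^ 8 * coeff8 + w ^ 16 * coeff16

lemma phiX_comp_phiY_comm (h : v ^ 2 + v + (u ^ 3 + u + 1) = 0) :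
    (phiX (C u) X).comp (phiY (C u) (C v) X) = (phiY (C u) (C v) X).comp (phiX (C u) X) := by
  rw [phiX_comp, phiY_comp]
  exact phiX_phiY_comm (by simpa only [map_add, map_pow, map_one, map_zero] using congrArg C h) X

end Commute

lemma degree_curveEq : curveEq.degree = 2 := by
  unfold curveEq; compute_degree!

instance : Nontrivial A := AdjoinRoot.nontrivial _ (by simp [degree_curveEq])

instance : CharP A 2 := charP_of_injective_algebraMap' (ZMod 2) 2

lemma aY_sq_add_aY_add : aY ^ 2 + aY + (aX ^ 3 + aX + 1) = 0 :=
  calc aY ^ 2 + aY + (aX ^ 3 + aX + 1)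
      = AdjoinRoot.mk curveEq (X ^ 2 + X + C (X ^ 3 + X + 1)) := by
        simp only [aX, aY, map_add, map_pow, map_one, AdjoinRoot.mk_X, AdjoinRoot.mk_C]
    _ = 0 := AdjoinRoot.mk_self

lemma rhoX_eq_phiX : rhoX = phiX (C aX) X := by
  simp only [rhoX, phiX, map_add, map_pow]

lemma rhoY_eq_phiY : rhoY = phiY (C aX) (C aY) X := by
  simp only [rhoY, phiY, map_add, map_mul, map_pow]

/-- The additive polynomials `ρ_x` and `ρ_y` commute under composition:
`ρ_x(ρ_y(w)) = ρ_y(ρ_x(w))`. -/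
theorem stmt3 : rhoX.comp rhoY = rhoY.comp rhoX := by
  rw [rhoX_eq_phiX, rhoY_eq_phiY]
  exact phiX_comp_phiY_comm aY_sq_add_aY_add
end
end

section
/- Let E := Σ_{i≥0} a_i z^{2^i} ∈ K[[z]]. Then E satisfies the exponential functional equation of the Drinfeld module: E(x·z) = x·E(z) + (x² + x)·E(z)² + E(z)⁴, where E(x·z) denotes the rescaling of E by x (the series whose n-th coefficient is xⁿ times that of E). -/
/-!
In characteristic 2, squaring a power series twists its coefficients by Frobenius and spreads
them from `zⁿ` to `z²ⁿ`. Hence `E²` and `E⁴` are supported on the powers of two like `E`, with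
coefficients `a_{j-1}²` and `a_{j-2}⁴` at `z^{2^j}`. Comparing coefficients of `z^{2^j}` turns the
functional equation into `x^{2^j} a_j = x a_j + [1]_x a_{j-1}² + a_{j-2}⁴`, and since
`[j]_x = x^{2^j} + x` this is exactly the recursion defining `a_j` (for `j = 1` it reads
`x² = x + [1]_x`).
-/

noncomputable section

open Polynomial

/-- The bracket `[j]_x = x^{2^j} + x ∈ A`. -/
def brX (j : ℕ) : A := aX ^ 2 ^ j + aX

variable (K : Type) [Field K] [Algebra A K]

/-- The coefficients `a_j = 1/d_j` of the exponential function: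
`a₀ = a₁ = 1` and `a_j = ([1]_x·a_{j-1}² + a_{j-2}⁴)/[j]_x` for `j ≥ 2`. -/
def aSeq : ℕ → K
  | 0 => 1
  | 1 => 1
  | (j + 2) =>
      (algebraMap A K (brX 1) * (aSeq (j + 1)) ^ 2 + (aSeq j) ^ 4) /
        algebraMap A K (brX (j + 2))

open scoped Classical in
/-- The exponential power series `E = Σ_{i≥0} a_i z^{2^i} ∈ K[[z]]`. -/
def expSer : PowerSeries K :=
  PowerSeries.mk fun n => if ∃ i : ℕ, n = 2 ^ i then aSeq K (Nat.log 2 n) else 0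

theorem PowerSeries.coeff_pow_expChar_pow {R : Type*} [CommRing R] (p : ℕ) [ExpChar R p]
    (f : PowerSeries R) (k n : ℕ) :
    PowerSeries.coeff n (f ^ p ^ k) =
      if p ^ k ∣ n then PowerSeries.coeff (n / p ^ k) f ^ p ^ k else 0 := by
  rw [← MvPowerSeries.map_iterateFrobenius_expand p (expChar_ne_zero R p) f k]
  change PowerSeries.coeff n (PowerSeries.map _ (PowerSeries.expand _ _ f)) = _
  rw [PowerSeries.coeff_map, PowerSeries.coeff_expand]
  split_ifs
  · rfl
  · exact zero_pow (pow_ne_zero _ (expChar_ne_zero R p))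

theorem A.two_eq_zero : (2 : A) = 0 := by
  rw [← map_ofNat (algebraMap (ZMod 2) A) 2]
  exact map_zero _

instance charP_two : CharP K 2 :=
  (CharP.charP_iff_prime_eq_zero Nat.prime_two).mpr <| by
    rw [Nat.cast_ofNat, ← map_ofNat (algebraMap A K), A.two_eq_zero, map_zero]

theorem brX_ne_zero {j : ℕ} (hj : j ≠ 0) : brX j ≠ 0 := by
  have hdeg : curveEq.degree ≠ 0 := by
    have : curveEq.degree = 2 := by unfold curveEq; compute_degree!
    simp [this]
  rw [brX, aX, ← map_pow, ← map_add, ← CharTwo.sub_eq_add, Ne,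
    map_eq_zero_iff _ (AdjoinRoot.of.injective_of_degree_ne_zero hdeg)]
  exact FiniteField.X_pow_card_pow_sub_X_ne_zero (ZMod 2) hj one_lt_two

theorem aSeq_mul_brX [FaithfulSMul A K] (j : ℕ) :
    algebraMap A K (brX (j + 2)) * aSeq K (j + 2) =
      algebraMap A K (brX 1) * aSeq K (j + 1) ^ 2 + aSeq K j ^ 4 := by
  rw [aSeq, mul_div_cancel₀]
  exact (map_ne_zero_iff _ (FaithfulSMul.algebraMap_injective A K)).mpr
    (brX_ne_zero (by omega))

theorem coeff_expSer_two_pow (j : ℕ) : PowerSeries.coeff (2 ^ j) (expSer K) = aSeq K j := by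
  simp [expSer, Nat.log_pow]

theorem coeff_expSer_of_ne_two_pow {n : ℕ} (hn : ∀ i, n ≠ 2 ^ i) :
    PowerSeries.coeff n (expSer K) = 0 := by
  simp [expSer, hn]

theorem coeff_expSer_pow_two_pow {k j : ℕ} (h : k ≤ j) :
    PowerSeries.coeff (2 ^ j) (expSer K ^ 2 ^ k) = aSeq K (j - k) ^ 2 ^ k := by
  rw [PowerSeries.coeff_pow_expChar_pow, if_pos (pow_dvd_pow 2 h), Nat.pow_div h two_pos,
    coeff_expSer_two_pow]

theorem coeff_expSer_pow_two_pow_of_lt {k j : ℕ} (h : j < k) :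
    PowerSeries.coeff (2 ^ j) (expSer K ^ 2 ^ k) = 0 := by
  rw [PowerSeries.coeff_pow_expChar_pow, if_neg]
  rwa [Nat.pow_dvd_pow_iff_le_right one_lt_two, not_le]

theorem coeff_expSer_pow_two_pow_of_ne_two_pow (k : ℕ) {n : ℕ} (hn : ∀ i, n ≠ 2 ^ i) :
    PowerSeries.coeff n (expSer K ^ 2 ^ k) = 0 := by
  rw [PowerSeries.coeff_pow_expChar_pow]
  split_ifs with hdvd
  · obtain ⟨m, rfl⟩ := hdvd
    rw [Nat.mul_div_cancel_left _ (by positivity), coeff_expSer_of_ne_two_pow,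
      zero_pow (by positivity)]
    rintro i rfl
    exact hn (k + i) (pow_add 2 k i).symm
  · rfl

/-- `E` satisfies the exponential functional equation of the Drinfeld module:
`E(x·z) = x·E(z) + (x² + x)·E(z)² + E(z)⁴`, where `E(x·z)` is the rescaling
of `E` by `x`. -/
theorem stmt4 [IsFractionRing A K] :
    PowerSeries.rescale (algebraMap A K aX) (expSer K) =
      PowerSeries.C (algebraMap A K aX) * expSer K +
        PowerSeries.C (algebraMap A K (aX ^ 2 + aX)) * (expSer K) ^ 2 +
          (expSer K) ^ 4 := by
  set x := algebraMap A K aX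
  have two : (2 : K) = 0 := CharTwo.two_eq_zero
  have hbr (j : ℕ) : algebraMap A K (brX j) = x ^ 2 ^ j + x := by
    rw [brX, map_add, map_pow]
  rw [show expSer K ^ 4 = expSer K ^ 2 ^ 2 by norm_num,
    show expSer K ^ 2 = expSer K ^ 2 ^ 1 by norm_num, show aX ^ 2 + aX = brX 1 by rw [brX, pow_one]]
  ext n
  rw [PowerSeries.coeff_rescale, map_add, map_add, PowerSeries.coeff_C_mul,
    PowerSeries.coeff_C_mul, hbr]
  by_cases hn : ∃ j, n = 2 ^ j
  · obtain ⟨j, rfl⟩ := hn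
    match j with
    | 0 =>
      rw [coeff_expSer_pow_two_pow_of_lt K one_pos, coeff_expSer_pow_two_pow_of_lt K two_pos]
      ring
    | 1 =>
      rw [coeff_expSer_pow_two_pow K le_rfl, coeff_expSer_pow_two_pow_of_lt K one_lt_two,
        coeff_expSer_two_pow]
      simp only [Nat.sub_self, aSeq]
      linear_combination -x * two
    | j + 2 =>
      have hrec := aSeq_mul_brX K j
      rw [hbr, hbr] at hrec
      rw [coeff_expSer_pow_two_pow K (by omega), coeff_expSer_pow_two_pow K (by omega),
        coeff_expSer_two_pow]
      simp only [Nat.add_sub_cancel, Nat.reduceSubDiff]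
      linear_combination hrec - x * aSeq K (j + 2) * two
  · push Not at hn
    simp only [coeff_expSer_of_ne_two_pow K hn, coeff_expSer_pow_two_pow_of_ne_two_pow K _ hn]
    ring
end
end

section
/- Fix k ≥ 2 and let B_{k,k-2} ∈ A denote the coefficient of w^{2^{k-2}} in e_k(w). If e_k(w) divides p_k(w) in K[w], then the quotient R_k(w) := p_k(w)/e_k(w) satisfies R_k(w) = a_k·e_k(w) + C, where C = a_{k-1} + a_k·B_{k,k-2}²; equivalently, p_k(w) = a_k·e_k(w)² + (a_{k-1} + a_k·B_{k,k-2}²)·e_k(w). (In the notation d_j = 1/a_j this reads R_k = e_k/d_k + C with C = 1/d_{k-1} + B_{k,k-2}²/d_k.) -/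
noncomputable section

open Polynomial
open scoped Classical

/-- The monomials `xⁱyʲ` with `j ∈ {0,1}` and `2i + 3j < k`. -/
def monoSet (k : ℕ) : Finset A :=
  ((Finset.range k ×ˢ Finset.range 2).filter fun p => 2 * p.1 + 3 * p.2 < k).image
    fun p => aX ^ p.1 * aY ^ p.2

/-- `A_{<k}` : the `𝔽₂`-linear span of the monomials `xⁱyʲ` with `j ∈ {0,1}`
and `2i + 3j < k`, realized as the finite set of all subset sums. -/
def Alt (k : ℕ) : Finset A := (monoSet k).powerset.image fun s => s.sum id

/-- `t_k := x^{k/2}` if `k` is even, `t_k := y·x^{(k-3)/2}` if `k` is odd. -/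
def tk (k : ℕ) : A := if Even k then aX ^ (k / 2) else aY * aX ^ ((k - 3) / 2)

/-- `e_k(w) := ∏_{a ∈ A_{<k}} (w + a) ∈ A[w]`. -/
def ePoly (k : ℕ) : Polynomial A := ∏ a ∈ Alt k, (X + C a)

/-- `D_k := e_k(t_k)`, the product of all monic elements of `A` of degree `k`. -/
def Dk (k : ℕ) : A := (ePoly k).eval (tk k)

variable (K : Type) [Field K] [Algebra A K]

/-- The coefficients `b_j = 1/ℓ_j` of the logarithm function:
`b₀ = b₁ = 1` and `b_j = ([1]_x^{2^{j-1}}·b_{j-1} + b_{j-2})/[j]_x` for `j ≥ 2`. -/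
def bSeq : ℕ → K
  | 0 => 1
  | 1 => 1
  | (j + 2) =>
      (algebraMap A K (brX 1) ^ 2 ^ (j + 1) * bSeq (j + 1) + bSeq j) /
        algebraMap A K (brX (j + 2))

/-- `p_k(w) := Σ_{j=0}^{k} a_j·b_{k-j}^{2^j}·w^{2^j} ∈ K[w]`. -/
def pPoly (k : ℕ) : Polynomial K :=
  ∑ j ∈ Finset.range (k + 1), C (aSeq K j * (bSeq K (k - j)) ^ 2 ^ j) * X ^ 2 ^ j

/-- `S_{n,r}(x₁,…,x_n) := Σ_{n ≥ i₁ > i₂ > … > i_r ≥ 1} ∏_{j=1}^{r}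
x_{i_j}^{2^{n-j+1-i_j}}`, with `S_{n,0} = 1` and `S_{n,r} = 0` for `r > n`. -/
def Ssum (R : Type*) [CommRing R] (n r : ℕ) (x : ℕ → R) : R :=
  ∑ f ∈ Finset.univ.filter
      (fun f : Fin r → Fin (n + 1) => StrictAnti f ∧ ∀ j, 1 ≤ (f j : ℕ)),
    ∏ j : Fin r, x (f j) ^ 2 ^ (n - (j : ℕ) - (f j : ℕ))


/-!
The roots of `e_k` are the `2^{k-1}` elements of the `𝔽₂`-span of the `k - 1` monomials
`xⁱyʲ` with `2i + 3j < k`, which are `𝔽₂`-independent. Hence `e_k` is additive: only the monomials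
`w^{2^j}` occur, so `e_k = w^{2^{k-1}} + B w^{2^{k-2}} + L` with `deg L < 2^{k-2}`. As squaring is
additive in characteristic 2, `a_k e_k² + C e_k` agrees with
`p_k = a_k w^{2^k} + a_{k-1} w^{2^{k-1}} + (lower terms)` (recall `b₀ = b₁ = 1`) in every degree
`≥ 2^{k-1}`. Their difference is a multiple of `e_k` of degree less than `deg e_k`, hence zero.
-/

namespace Polynomial

section Semiring

variable {R : Type*} [Semiring R]

def IsLinearized (f : R[X]) : Prop := ∀ n, f.coeff n ≠ 0 → ∃ j, n = 2 ^ j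

theorem isLinearized_X : IsLinearized (X : R[X]) := fun n hn =>
  ⟨0, by_contra fun h => hn (coeff_X_of_ne_one (by simpa using h))⟩

variable {f g : R[X]}

theorem IsLinearized.add (hf : IsLinearized f) (hg : IsLinearized g) : IsLinearized (f + g) :=
  fun n hn => if h : f.coeff n = 0 then hg n (by simpa [h] using hn) else hf n h

theorem IsLinearized.C_mul (hf : IsLinearized f) (c : R) : IsLinearized (C c * f) :=
  fun n hn => hf n fun h => hn (by simp [h])

end Semiring

section CommSemiring

variable {R : Type*} [CommSemiring R] [CharP R 2] {f : R[X]}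

theorem IsLinearized.sq (hf : IsLinearized f) : IsLinearized (f ^ 2) := by
  intro n hn
  rw [← map_frobenius_expand, coeff_map, coeff_expand two_pos] at hn
  split_ifs at hn with h2
  · obtain ⟨j, hj⟩ := hf (n / 2) fun h => hn (by rw [h, map_zero])
    exact ⟨j + 1, by rw [pow_succ, ← hj, Nat.div_mul_cancel h2]⟩
  · exact absurd (map_zero _) hn

theorem IsLinearized.comp_X_add_C (hf : IsLinearized f) (b : R) :
    f.comp (X + C b) = f + C (f.eval b) := by
  rw [eval_eq_sum, sum_def]
  conv_lhs => rw [f.as_sum_support]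
  rw [sum_comp]
  have hmonomial : ∀ i ∈ f.support,
      (monomial i (f.coeff i)).comp (X + C b) = monomial i (f.coeff i) + C (f.coeff i * b ^ i) := by
    intro i hi
    obtain ⟨j, rfl⟩ := hf i (mem_support_iff.mp hi)
    rw [monomial_comp, add_pow_char_pow, ← C_pow, ← C_mul_X_pow_eq_monomial, mul_add,
      ← Polynomial.C_mul]
  rw [Finset.sum_congr rfl hmonomial, Finset.sum_add_distrib, ← map_sum C, ← f.as_sum_support]

end CommSemiring

section subsetSumPoly

variable {R ι : Type*} [CommSemiring R] (S : Finset ι) (v : ι → R)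

def subsetSumPoly : R[X] :=
  ∏ s ∈ S.powerset, (X + C (∑ i ∈ s, v i))

theorem subsetSumPoly_monic : (subsetSumPoly S v).Monic :=
  monic_prod_of_monic _ _ fun _ _ => monic_X_add_C _

theorem natDegree_subsetSumPoly [Nontrivial R] :
    (subsetSumPoly S v).natDegree = 2 ^ S.card := by
  rw [subsetSumPoly, natDegree_prod_of_monic _ _ fun _ _ => monic_X_add_C _]
  simp only [natDegree_X_add_C, Finset.sum_const, Finset.card_powerset, smul_eq_mul, mul_one]

theorem map_subsetSumPoly {R' : Type*} [CommSemiring R'] (φ : R →+* R') :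
    (subsetSumPoly S v).map φ = subsetSumPoly S (φ ∘ v) := by
  simp [subsetSumPoly, Polynomial.map_prod, Polynomial.map_sum]

theorem subsetSumPoly_insert [DecidableEq ι] {i : ι} (hi : i ∉ S) :
    subsetSumPoly (insert i S) v =
      subsetSumPoly S v * (subsetSumPoly S v).comp (X + C (v i)) := by
  rw [subsetSumPoly, Finset.prod_powerset_insert hi, subsetSumPoly, prod_comp]
  congr 1
  refine Finset.prod_congr rfl fun s hs => ?_
  rw [Finset.sum_insert fun h => hi (Finset.mem_powerset.mp hs h)]
  simp only [add_comp, X_comp, C_comp, map_add]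
  ring

theorem isLinearized_subsetSumPoly [CharP R 2] : IsLinearized (subsetSumPoly S v) := by
  induction S using Finset.induction_on with
  | empty => simpa [subsetSumPoly] using isLinearized_X
  | insert i S hi ih =>
    rw [subsetSumPoly_insert S v hi, ih.comp_X_add_C,
      show ∀ f : R[X], ∀ c, f * (f + C c) = f ^ 2 + C c * f from fun f c => by ring]
    exact ih.sq.add (ih.C_mul _)

end subsetSumPoly

section CommRing

variable {R : Type*} [CommRing R]

theorem IsLinearized.exists_eq_X_pow_add {E : R[X]} (hlin : IsLinearized E) (hmon : E.Monic)
    {m : ℕ} (hdeg : E.natDegree = 2 ^ (m + 1)) :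
    ∃ L : R[X], L.natDegree < 2 ^ m ∧
      E = X ^ 2 ^ (m + 1) + C (E.coeff (2 ^ m)) * X ^ 2 ^ m + L := by
  refine ⟨E - X ^ 2 ^ (m + 1) - C (E.coeff (2 ^ m)) * X ^ 2 ^ m, ?_, by ring⟩
  have hm : 2 ^ m < 2 ^ (m + 1) := Nat.pow_lt_pow_right one_lt_two (lt_add_one m)
  refine (natDegree_le_iff_coeff_eq_zero.mpr fun n hn => ?_).trans_lt
    (Nat.sub_one_lt (by positivity))
  rw [coeff_sub, coeff_sub, coeff_X_pow, coeff_C_mul_X_pow]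
  obtain rfl | hnm := eq_or_ne n (2 ^ m)
  · simp [hm.ne]
  rw [if_neg hnm, sub_zero]
  split_ifs with htop
  · rw [htop, ← hdeg, hmon.coeff_natDegree, sub_self]
  · rw [sub_zero]
    by_contra hne
    obtain ⟨j, rfl⟩ := hlin n hne
    have hle : 2 ^ j ≤ 2 ^ (m + 1) := hdeg ▸ le_natDegree_of_ne_zero hne
    have hgt : 2 ^ m < 2 ^ j := lt_of_le_of_ne (by omega) (Ne.symm hnm)
    rw [Nat.pow_le_pow_iff_right one_lt_two] at hle
    rw [Nat.pow_lt_pow_iff_right one_lt_two] at hgt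
    exact htop (by rw [show j = m + 1 by omega])

theorem IsLinearized.eq_C_mul_sq_add_C_mul_of_dvd [CharP R 2] {E P : R[X]} {m : ℕ} {a a' : R}
    (hlin : IsLinearized E) (hmon : E.Monic) (hdeg : E.natDegree = 2 ^ (m + 1))
    (hP : P.natDegree < 2 ^ (m + 1))
    (hdvd : E ∣ P + C a' * X ^ 2 ^ (m + 1) + C a * X ^ 2 ^ (m + 2)) :
    P + C a' * X ^ 2 ^ (m + 1) + C a * X ^ 2 ^ (m + 2) =
      C a * E ^ 2 + C (a' + a * E.coeff (2 ^ m) ^ 2) * E := by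
  obtain ⟨L, hL, hEL⟩ := hlin.exists_eq_X_pow_add hmon hdeg
  set B := E.coeff (2 ^ m)
  set c := a' + a * B ^ 2 with hc
  set Y : R[X] := X ^ 2 ^ m
  have hm : 2 ^ m < 2 ^ (m + 1) := Nat.pow_lt_pow_right one_lt_two (lt_add_one m)
  have hY2 : X ^ 2 ^ (m + 1) = Y ^ 2 := by rw [pow_succ, pow_mul]
  have hY4 : X ^ 2 ^ (m + 2) = Y ^ 4 := by rw [pow_succ, pow_mul, hY2, ← pow_mul]
  have hrem : P + C a' * X ^ 2 ^ (m + 1) + C a * X ^ 2 ^ (m + 2) - (C a * E ^ 2 + C c * E) =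
      P - C a * L ^ 2 - C c * (C B * Y + L) := by
    rw [hEL, hY2, hY4, hc, C_add, Polynomial.C_mul, C_pow]
    -- the cross terms of `E ^ 2` vanish in characteristic 2
    linear_combination (-C a * (C B ^ 2 * Y ^ 2 + C B * Y ^ 3 + Y ^ 2 * L + C B * Y * L)) *
      (CharTwo.two_eq_zero : (2 : R[X]) = 0)
  have hremDeg : (P - C a * L ^ 2 - C c * (C B * Y + L)).natDegree < E.natDegree := by
    have hsq : (C a * L ^ 2).natDegree < 2 ^ (m + 1) :=
      (natDegree_C_mul_le _ _).trans_lt <| natDegree_pow_le.trans_lt (by rw [pow_succ]; omega)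
    have hlow : (C c * (C B * Y + L)).natDegree < 2 ^ (m + 1) :=
      (natDegree_C_mul_le _ _).trans_lt <| (natDegree_add_le _ _).trans_lt <|
        max_lt ((natDegree_C_mul_X_pow_le _ _).trans_lt hm) (hL.trans hm)
    rw [hdeg]
    exact (natDegree_sub_le _ _).trans_lt <|
      max_lt ((natDegree_sub_le _ _).trans_lt (max_lt hP hsq)) hlow
  rw [← sub_eq_zero, hrem]
  by_contra hne
  refine hmon.not_dvd_of_natDegree_lt hne hremDeg (hrem ▸ dvd_sub hdvd ?_)
  exact ⟨C a * E + C c, by ring⟩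

end CommRing

end Polynomial

theorem LinearIndepOn.injOn_finsetSum {R M ι : Type*} [Ring R] [Nontrivial R] [AddCommGroup M]
    [Module R M] {v : ι → M} {T : Set ι} (hv : LinearIndepOn R v T) :
    Set.InjOn (fun s : Finset ι => ∑ i ∈ s, v i) {s | ↑s ⊆ T} := by
  intro s hs t ht hst
  let g : ι → R := fun i => (if i ∈ s then 1 else 0) - (if i ∈ t then 1 else 0)
  have hg : ∀ i ∈ s ∪ t, g i = 0 := by
    refine linearIndepOn_iff'.mp hv (s ∪ t) g (by simpa using And.intro hs ht) ?_
    simp only [g, sub_smul, ite_smul, one_smul, zero_smul, Finset.sum_sub_distrib,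
      Finset.sum_ite_mem, Finset.union_inter_cancel_left, Finset.union_inter_cancel_right]
    exact sub_eq_zero.mpr hst
  ext i
  constructor <;> intro hi <;> by_contra hi' <;>
    simpa [g, hi, hi'] using hg i (by simp [hi])
lemma curveEq_monic : curveEq.Monic := by
  unfold curveEq; monicity!

lemma curveEq_natDegree : curveEq.natDegree = 2 := by
  unfold curveEq; compute_degree!

def monomialBasis : Module.Basis (ℕ × Fin 2) (ZMod 2) A :=
  ((basisMonomials (ZMod 2)).smulTower (AdjoinRoot.powerBasis' curveEq_monic).basis).reindex
    ((Equiv.refl ℕ).prodCongr (finCongr curveEq_natDegree))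

lemma aX_pow_mul_aY_pow_eq_monomialBasis (i j : ℕ) (hj : j < 2) :
    aX ^ i * aY ^ j = monomialBasis (i, ⟨j, hj⟩) := by
  simp [monomialBasis, Algebra.smul_def, aX, aY, monomial_one_right_eq_X_pow]
  rfl

lemma linearIndepOn_monoSet (k : ℕ) : LinearIndepOn (ZMod 2) id (monoSet k : Set A) := by
  refine monomialBasis.linearIndependent.linearIndepOn_id.mono ?_
  intro a ha
  simp only [monoSet, Finset.coe_image, Finset.coe_filter, Finset.mem_product,
    Finset.mem_range] at ha
  obtain ⟨⟨i, j⟩, ⟨⟨-, hj⟩, -⟩, rfl⟩ := ha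
  exact ⟨_, (aX_pow_mul_aY_pow_eq_monomialBasis i j hj).symm⟩

lemma card_monoSet {k : ℕ} (hk : 2 ≤ k) : (monoSet k).card = k - 1 := by
  rw [monoSet, Finset.card_image_of_injOn]
  · rw [Finset.card_filter, Finset.sum_product]
    simp only [Finset.sum_range_succ, Finset.sum_range_zero, zero_add, mul_zero, mul_one,
      add_zero]
    rw [Finset.sum_add_distrib, ← Finset.card_filter, ← Finset.card_filter]
    have hj0 : (Finset.range k).filter (fun i => 2 * i < k) = Finset.range ((k + 1) / 2) := by
      ext i; simp only [Finset.mem_filter, Finset.mem_range]; omega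
    have hj1 : (Finset.range k).filter (fun i => 2 * i + 3 < k) = Finset.range ((k - 2) / 2) := by
      ext i; simp only [Finset.mem_filter, Finset.mem_range]; omega
    rw [hj0, hj1, Finset.card_range, Finset.card_range]
    omega
  · rintro ⟨i, j⟩ hij ⟨i', j'⟩ hij' h
    simp only [Finset.coe_filter, Finset.mem_product, Finset.mem_range,
      Set.mem_ofPred_eq] at hij hij' h
    rw [aX_pow_mul_aY_pow_eq_monomialBasis i j hij.1.2,
      aX_pow_mul_aY_pow_eq_monomialBasis i' j' hij'.1.2] at h
    simpa using monomialBasis.injective h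

lemma ePoly_eq_subsetSumPoly (k : ℕ) : ePoly k = subsetSumPoly (monoSet k) id := by
  rw [ePoly, Alt, subsetSumPoly, Finset.prod_image]
  exact (linearIndepOn_monoSet k).injOn_finsetSum.mono fun s hs => Finset.mem_powerset.mp hs

lemma charP_two_of_algebra : CharP K 2 := by
  refine (CharP.charP_iff_prime_eq_zero Nat.prime_two).mpr ?_
  rw [Nat.cast_ofNat, ← map_ofNat (algebraMap A K), ← map_ofNat (algebraMap (ZMod 2) A),
    show (OfNat.ofNat 2 : ZMod 2) = 0 from rfl, map_zero, map_zero]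

lemma pPoly_eq_add (m : ℕ) : ∃ P : K[X], P.natDegree < 2 ^ (m + 1) ∧
    pPoly K (m + 2) =
      P + C (aSeq K (m + 1)) * X ^ 2 ^ (m + 1) + C (aSeq K (m + 2)) * X ^ 2 ^ (m + 2) := by
  refine ⟨∑ j ∈ Finset.range (m + 1), C (aSeq K j * bSeq K (m + 2 - j) ^ 2 ^ j) * X ^ 2 ^ j,
    ?_, ?_⟩
  · refine (natDegree_sum_le_of_forall_le _ _ (n := 2 ^ m) fun j hj => ?_).trans_lt
      (Nat.pow_lt_pow_right one_lt_two (lt_add_one m))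
    exact (natDegree_C_mul_X_pow_le _ _).trans
      (Nat.pow_le_pow_right two_pos (Nat.lt_succ_iff.mp (Finset.mem_range.mp hj)))
  · rw [pPoly, Finset.sum_range_succ, Finset.sum_range_succ]
    simp [bSeq]

theorem stmt9 (k : ℕ) (hk : 2 ≤ k)
    (hdvd : (ePoly k).map (algebraMap A K) ∣ pPoly K k) :
    (∀ R : Polynomial K,
      pPoly K k = (ePoly k).map (algebraMap A K) * R →
        R = C (aSeq K k) * (ePoly k).map (algebraMap A K) +
          C (aSeq K (k - 1) +
            aSeq K k * (algebraMap A K ((ePoly k).coeff (2 ^ (k - 2)))) ^ 2)) ∧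
    pPoly K k =
      C (aSeq K k) * ((ePoly k).map (algebraMap A K)) ^ 2 +
        C (aSeq K (k - 1) +
            aSeq K k * (algebraMap A K ((ePoly k).coeff (2 ^ (k - 2)))) ^ 2) *
          (ePoly k).map (algebraMap A K) := by
  have := charP_two_of_algebra K
  obtain ⟨m, rfl⟩ : ∃ m, k = m + 2 := ⟨k - 2, by omega⟩
  rw [show m + 2 - 1 = m + 1 by omega, Nat.add_sub_cancel, ← coeff_map]
  rw [ePoly_eq_subsetSumPoly, map_subsetSumPoly, Function.comp_id] at hdvd ⊢
  set E := subsetSumPoly (monoSet (m + 2)) (algebraMap A K)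
  have hEdeg : E.natDegree = 2 ^ (m + 1) := by
    rw [natDegree_subsetSumPoly, card_monoSet (by omega)]; rfl
  obtain ⟨P, hP, hp⟩ := pPoly_eq_add K m
  rw [hp] at hdvd ⊢
  have hEmon : E.Monic := subsetSumPoly_monic _ _
  have hpE := (isLinearized_subsetSumPoly _ _).eq_C_mul_sq_add_C_mul_of_dvd hEmon hEdeg hP hdvd
  refine ⟨fun R hR => mul_left_cancel₀ hEmon.ne_zero ?_, hpE⟩
  rw [← hR, hpE]
  ring
end
end
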